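/- Let g be a Lorentzian 3×3 real symmetric matrix, g8 a positive-definite 8×8 real symmetric matrix, c ∈ ℝ, A ≠ 0, and let θ ∈ ℝ satisfy A·sinh θ > 0; set u := sinh θ/(A·√|g|) (which is positive). Then U_B(A)ᵀ · M_C(g, g8, c) · U_B(A) = M_check( u^(4/3)·g, u^(−2/3)·g8, −sinh(2θ)/(2·A²·√|g|), A²·√|g|·(coth θ − c/√|g|) ). In particular the dual fields of the timelike Buscher duality form a one-parameter family, indexed by the local SO(1,1) angle θ, all describing the same generalised metric. -/

import Mathlib

open Matrix

/-- The (g,C)-frame generalised metric: a 14×14 matrix in 3+3+8 block form. -/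
noncomputable def MC (g : Matrix (Fin 3) (Fin 3) ℝ) (g8 : Matrix (Fin 8) (Fin 8) ℝ) (c : ℝ) :
    Matrix ((Fin 3 ⊕ Fin 3) ⊕ Fin 8) ((Fin 3 ⊕ Fin 3) ⊕ Fin 8) ℝ :=
  |g.det * g8.det| ^ (-(1 : ℝ) / 2) •
    fromBlocks
      (fromBlocks ((1 + c ^ 2 / g.det) • g) ((c / g.det) • g) ((c / g.det) • g)
        ((1 / g.det) • g))
      0 0 g8

/-- The checked-frame generalised metric, with both a 3-form c and a trivector ω. -/
noncomputable def Mcheck (g : Matrix (Fin 3) (Fin 3) ℝ) (g8 : Matrix (Fin 8) (Fin 8) ℝ)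
    (c ω : ℝ) : Matrix ((Fin 3 ⊕ Fin 3) ⊕ Fin 8) ((Fin 3 ⊕ Fin 3) ⊕ Fin 8) ℝ :=
  |g.det * g8.det| ^ (-(1 : ℝ) / 2) •
    fromBlocks
      (fromBlocks ((1 + c ^ 2 / g.det) • g)
        ((ω + c * (1 + c * ω) / g.det) • g)
        ((ω + c * (1 + c * ω) / g.det) • g)
        ((ω ^ 2 + (1 + c * ω) ^ 2 / g.det) • g))
      0 0 g8

/-- The Buscher duality matrix: [[0, A·1], [−(1/A)·1, 0]] on the first 6 coordinates,
identity on the 8 transverse coordinates. -/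
noncomputable def UB (A : ℝ) : Matrix ((Fin 3 ⊕ Fin 3) ⊕ Fin 8) ((Fin 3 ⊕ Fin 3) ⊕ Fin 8) ℝ :=
  fromBlocks (fromBlocks 0 (A • 1) ((-(1 / A)) • 1) 0) 0 0 1

/-- A 3×3 real symmetric (Hermitian) matrix is Lorentzian if it has exactly one negative
and two positive eigenvalues. -/
def Lorentzian3 (g : Matrix (Fin 3) (Fin 3) ℝ) : Prop :=
  ∃ hg : g.IsHermitian,
    {i | hg.eigenvalues i < 0}.ncard = 1 ∧ {i | 0 < hg.eigenvalues i}.ncard = 2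

/-!
Conjugation by `U_B(A)` swaps the spacetime and dual blocks of `M_C`, turning the block
coefficients `(1 + c²/det g, c/det g, 1/det g)` into `(1/(A² det g), -c/det g, A²(1 + c²/det g))`.
Rescaling `g ↦ u^(4/3) g`, `g8 ↦ u^(-2/3) g8` leaves the prefactor of the transverse block
unchanged and multiplies the coefficients of the 3+3 block by `u²`. Since a Lorentzian `g` has
`det g = -√|g|²`, matching the two sides reduces to three scalar identities, each a multiple of
`cosh² θ - sinh² θ = 1`.
-/

theorem Finset.prod_neg_of_unique_neg {ι : Type*} [Fintype ι] {f : ι → ℝ} {i₀ : ι}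
    (hneg : f i₀ < 0) (hpos : ∀ j ≠ i₀, 0 < f j) : ∏ i, f i < 0 := by
  classical
  rw [← Finset.mul_prod_erase _ _ (Finset.mem_univ i₀)]
  exact mul_neg_of_neg_of_pos hneg
    (Finset.prod_pos fun j hj => hpos j (Finset.ne_of_mem_erase hj))

theorem Lorentzian3.det_neg {g : Matrix (Fin 3) (Fin 3) ℝ} (hg : Lorentzian3 g) : g.det < 0 := by
  obtain ⟨hH, hneg, hpos⟩ := hg
  obtain ⟨i₀, hi₀⟩ := Set.ncard_eq_one.mp hneg
  have hpos_sub : {i | 0 < hH.eigenvalues i} ⊆ {i₀}ᶜ := by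
    rintro j (hj : 0 < hH.eigenvalues j) rfl
    exact (hi₀.symm.subset rfl : hH.eigenvalues j < 0).not_gt hj
  have hpos_eq : {i | 0 < hH.eigenvalues i} = {i₀}ᶜ :=
    Set.eq_of_subset_of_ncard_le hpos_sub
      (by rw [Set.ncard_compl, Set.ncard_singleton, hpos]; simp) (Set.toFinite _)
  rw [hH.det_eq_prod_eigenvalues]
  simp only [RCLike.ofReal_real_eq_id, id]
  exact Finset.prod_neg_of_unique_neg (i₀ := i₀) (hi₀.symm.subset rfl)
    fun j hj => hpos_eq.symm.subset hj

noncomputable def blockMetric {m n : Type*} (K p q r : ℝ) (g : Matrix m m ℝ)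
    (h : Matrix n n ℝ) : Matrix ((m ⊕ m) ⊕ n) ((m ⊕ m) ⊕ n) ℝ :=
  K • fromBlocks (fromBlocks (p • g) (q • g) (q • g) (r • g)) 0 0 h

theorem MC_eq_blockMetric (g : Matrix (Fin 3) (Fin 3) ℝ) (g8 : Matrix (Fin 8) (Fin 8) ℝ)
    (c : ℝ) :
    MC g g8 c = blockMetric (|g.det * g8.det| ^ (-(1 : ℝ) / 2))
      (1 + c ^ 2 / g.det) (c / g.det) (1 / g.det) g g8 := rfl

theorem Mcheck_eq_blockMetric (g : Matrix (Fin 3) (Fin 3) ℝ)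
    (g8 : Matrix (Fin 8) (Fin 8) ℝ) (c ω : ℝ) :
    Mcheck g g8 c ω = blockMetric (|g.det * g8.det| ^ (-(1 : ℝ) / 2))
      (1 + c ^ 2 / g.det) (ω + c * (1 + c * ω) / g.det)
      (ω ^ 2 + (1 + c * ω) ^ 2 / g.det) g g8 := rfl

theorem blockMetric_smul_smul {m n : Type*} (K p q r a : ℝ) {b : ℝ} (hb : b ≠ 0)
    (g : Matrix m m ℝ) (h : Matrix n n ℝ) :
    blockMetric K p q r (a • g) (b • h) =
      blockMetric (K * b) (a / b * p) (a / b * q) (a / b * r) g h := by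
  simp only [blockMetric, smul_smul, fromBlocks_smul, smul_zero]
  congr 3 <;> field_simp

theorem UB_transpose_mul_blockMetric_mul_UB (K p q r : ℝ) {A : ℝ} (hA : A ≠ 0)
    (g : Matrix (Fin 3) (Fin 3) ℝ) (g8 : Matrix (Fin 8) (Fin 8) ℝ) :
    (UB A)ᵀ * blockMetric K p q r g g8 * UB A =
      blockMetric K (r / A ^ 2) (-q) (A ^ 2 * p) g g8 := by
  simp only [UB, blockMetric, fromBlocks_transpose, fromBlocks_multiply, Matrix.mul_smul,
    Matrix.smul_mul, smul_smul, fromBlocks_smul, transpose_smul, transpose_zero,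
    transpose_one, Matrix.mul_zero, Matrix.zero_mul, Matrix.mul_one, Matrix.one_mul,
    zero_add, add_zero, smul_zero]
  congr 3 <;> field_simp

theorem Mcheck_rescale {u : ℝ} (hu : 0 < u) (g : Matrix (Fin 3) (Fin 3) ℝ)
    (g8 : Matrix (Fin 8) (Fin 8) ℝ) (c ω : ℝ) :
    Mcheck (u ^ ((4 : ℝ) / 3) • g) (u ^ (-(2 : ℝ) / 3) • g8) c ω =
      blockMetric (|g.det * g8.det| ^ (-(1 : ℝ) / 2))
        (u ^ 2 * (1 + c ^ 2 / (u ^ 4 * g.det)))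
        (u ^ 2 * (ω + c * (1 + c * ω) / (u ^ 4 * g.det)))
        (u ^ 2 * (ω ^ 2 + (1 + c * ω) ^ 2 / (u ^ 4 * g.det))) g g8 := by
  have hg_det : (u ^ ((4 : ℝ) / 3) • g).det = u ^ 4 * g.det := by
    rw [det_smul, Fintype.card_fin, ← Real.rpow_natCast, ← Real.rpow_mul hu.le]
    norm_num
  have hg8_det : (u ^ (-(2 : ℝ) / 3) • g8).det = u ^ (-(16 : ℝ) / 3) * g8.det := by
    rw [det_smul, Fintype.card_fin, ← Real.rpow_natCast, ← Real.rpow_mul hu.le]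
    norm_num
  have hprefactor : |u ^ 4 * g.det * (u ^ (-(16 : ℝ) / 3) * g8.det)| ^ (-(1 : ℝ) / 2) *
      u ^ (-(2 : ℝ) / 3) = |g.det * g8.det| ^ (-(1 : ℝ) / 2) := by
    rw [mul_mul_mul_comm, ← Real.rpow_natCast, ← Real.rpow_add hu, abs_mul,
      abs_of_pos (Real.rpow_pos_of_pos hu _),
      Real.mul_rpow (Real.rpow_pos_of_pos hu _).le (abs_nonneg _), ← Real.rpow_mul hu.le,
      mul_right_comm, ← Real.rpow_add hu]
    norm_num
  have hratio : u ^ ((4 : ℝ) / 3) / u ^ (-(2 : ℝ) / 3) = u ^ 2 := by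
    rw [← Real.rpow_sub hu, ← Real.rpow_natCast]
    norm_num
  rw [Mcheck_eq_blockMetric, blockMetric_smul_smul _ _ _ _ _ (Real.rpow_pos_of_pos hu _).ne',
    hg_det, hg8_det, hprefactor, hratio]

theorem stmt_17_general (g : Matrix (Fin 3) (Fin 3) ℝ) (g8 : Matrix (Fin 8) (Fin 8) ℝ)
    (hg : Lorentzian3 g) (c A θ : ℝ)
    (hA : A ≠ 0) (hθ : 0 < A * Real.sinh θ) :
    (UB A)ᵀ * MC g g8 c * UB A =
      Mcheck ((Real.sinh θ / (A * Real.sqrt (-g.det))) ^ ((4 : ℝ) / 3) • g)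
        ((Real.sinh θ / (A * Real.sqrt (-g.det))) ^ (-(2 : ℝ) / 3) • g8)
        (-Real.sinh (2 * θ) / (2 * A ^ 2 * Real.sqrt (-g.det)))
        (A ^ 2 * Real.sqrt (-g.det) *
          (Real.cosh θ / Real.sinh θ - c / Real.sqrt (-g.det))) := by
  have hD : 0 < Real.sqrt (-g.det) := Real.sqrt_pos.mpr (neg_pos.mpr hg.det_neg)
  have hdet : g.det = -Real.sqrt (-g.det) ^ 2 := by
    rw [Real.sq_sqrt (neg_nonneg.mpr hg.det_neg.le), neg_neg]
  have hsinh : Real.sinh θ ≠ 0 := by intro h; simp [h] at hθ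
  have hu : 0 < Real.sinh θ / (A * Real.sqrt (-g.det)) := by
    rw [← mul_div_mul_left _ _ hA, ← mul_assoc, ← sq]
    positivity
  rw [MC_eq_blockMetric, UB_transpose_mul_blockMetric_mul_UB _ _ _ _ hA, Mcheck_rescale hu]
  set D := Real.sqrt (-g.det)
  rw [hdet, Real.sinh_two_mul]
  congr 1
  · field_simp
    linear_combination Real.cosh_sq θ
  · field_simp
    linear_combination (D * Real.cosh θ - c * Real.sinh θ) * Real.cosh_sq θ
  · field_simp
    linear_combination ((D * Real.cosh θ - c * Real.sinh θ) ^ 2 - D ^ 2) * Real.cosh_sq θ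

/-- Timelike Buscher duality in the checked frame: for Lorentzian g, positive-definite g8,
A ≠ 0 and θ with A·sinh θ > 0, setting u := sinh θ/(A·√|g|), the dual generalised metric is
M_check(u^(4/3)·g, u^(−2/3)·g8, −sinh(2θ)/(2·A²·√|g|), A²·√|g|·(coth θ − c/√|g|)):
a one-parameter family of dual fields. -/
theorem stmt_17 (g : Matrix (Fin 3) (Fin 3) ℝ) (g8 : Matrix (Fin 8) (Fin 8) ℝ)
    (hg : Lorentzian3 g) (hg8 : g8.PosDef) (c A θ : ℝ)
    (hA : A ≠ 0) (hθ : 0 < A * Real.sinh θ) :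
    (UB A)ᵀ * MC g g8 c * UB A =
      Mcheck ((Real.sinh θ / (A * Real.sqrt (-g.det))) ^ ((4 : ℝ) / 3) • g)
        ((Real.sinh θ / (A * Real.sqrt (-g.det))) ^ (-(2 : ℝ) / 3) • g8)
        (-Real.sinh (2 * θ) / (2 * A ^ 2 * Real.sqrt (-g.det)))
        (A ^ 2 * Real.sqrt (-g.det) *
          (Real.cosh θ / Real.sinh θ - c / Real.sqrt (-g.det))) :=
  stmt_17_general g g8 hg c A θ hA hθ
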